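/- With unit-norm embeddings, |N_u| = d_u ≤ d_max, |N_u^-| = K, and L⁻_BPR, L⁻_COLES as above, one has L⁻_BPR ≤ (d_max/2)·ln(2e²/(e²+1))·(2K n_u − L⁻_COLES/2) + d_max·K·n_u·ln(e + 1/e). -/

import Mathlib

open scoped RealInnerProductSpace
open Real Set

/-!
Each term `ln (e^{ŷ_ui} + e^{ŷ_uj})` is at most `ln (e + e^{ŷ_uj})`, and since `x ↦ ln (e + e^x)`
is convex it lies below its chord over `[-1, 1]`, which is the affine bound of the statement.
For unit vectors `ŷ_uj + 1 = 2 - ‖e_u - e_j‖² / 2`, so the bound no longer depends on the positive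
item `i`; it is nonnegative, so summing over the at most `d_max` positive items costs a factor
`d_max`.
-/

lemma convexOn_log_exp_add_exp (a : ℝ) :
    ConvexOn ℝ univ fun x => log (exp a + exp x) := by
  have hpos : ∀ x, exp a + exp x ≠ 0 := fun x => by positivity
  have hderiv : deriv (fun x => log (exp a + exp x)) = fun x => exp x / (exp a + exp x) :=
    funext fun x => (((hasDerivAt_exp x).const_add _).log (hpos x)).deriv
  have hderiv2 : ∀ x, HasDerivAt (fun x => exp x / (exp a + exp x))
      ((exp x * (exp a + exp x) - exp x * exp x) / (exp a + exp x) ^ 2) x :=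
    fun x => (hasDerivAt_exp x).div ((hasDerivAt_exp x).const_add _) (hpos x)
  refine convexOn_univ_of_deriv2_nonneg ?_ ?_ fun x => ?_
  · fun_prop (disch := exact hpos _)
  · rw [hderiv]; exact fun x => (hderiv2 x).differentiableAt
  · rw [Function.iterate_succ_apply, Function.iterate_one, hderiv, (hderiv2 x).deriv]
    have : exp x * (exp a + exp x) - exp x * exp x = exp x * exp a := by ring
    rw [this]
    positivity

lemma ConvexOn.le_chord {f : ℝ → ℝ} {a b x : ℝ} (hf : ConvexOn ℝ (Icc a b) f) (hab : a < b)
    (hx : x ∈ Icc a b) : f x ≤ f a + (f b - f a) / (b - a) * (x - a) := by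
  have hba : 0 < b - a := sub_pos.2 hab
  have key := hf.2 (left_mem_Icc.2 hab.le) (right_mem_Icc.2 hab.le)
    (div_nonneg (sub_nonneg.2 hx.2) hba.le) (div_nonneg (sub_nonneg.2 hx.1) hba.le)
    (by field_simp; ring)
  have hcomb : (b - x) / (b - a) * a + (x - a) / (b - a) * b = x := by field_simp; ring
  simp only [smul_eq_mul, hcomb] at key
  refine key.trans_eq ?_
  field_simp
  ring

lemma log_exp_add_exp_le {x y : ℝ} (hy : y ≤ 1) (hx : x ∈ Icc (-1) 1) :
    log (exp y + exp x) ≤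
      1 / 2 * log (2 * exp 1 ^ 2 / (exp 1 ^ 2 + 1)) * (x + 1) + log (exp 1 + 1 / exp 1) := by
  have hmono : log (exp y + exp x) ≤ log (exp 1 + exp x) :=
    log_le_log (by positivity) (by gcongr)
  have hchord := ((convexOn_log_exp_add_exp 1).subset (subset_univ _) (convex_Icc _ _)).le_chord
    (by norm_num) hx
  have hslope : log (exp 1 + exp 1) - log (exp 1 + exp (-1)) =
      log (2 * exp 1 ^ 2 / (exp 1 ^ 2 + 1)) := by
    rw [← log_div (by positivity) (by positivity), exp_neg]
    congr 1
    field_simp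
    ring
  rw [hslope, exp_neg, ← one_div] at hchord
  linarith

lemma sum_sum_sum_le_mul_sum {ι κ μ : Type*} (s : Finset ι) (N : ι → Finset κ)
    (M : ι → Finset μ) (f : ι → κ → μ → ℝ) (g : ι → μ → ℝ) (D : ℕ)
    (hN : ∀ u ∈ s, (N u).card ≤ D)
    (hg : ∀ u ∈ s, ∀ j ∈ M u, 0 ≤ g u j)
    (hfg : ∀ u ∈ s, ∀ i ∈ N u, ∀ j ∈ M u, f u i j ≤ g u j) :
    ∑ u ∈ s, ∑ i ∈ N u, ∑ j ∈ M u, f u i j ≤ D * ∑ u ∈ s, ∑ j ∈ M u, g u j := by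
  rw [Finset.mul_sum]
  refine Finset.sum_le_sum fun u hu => ?_
  calc ∑ i ∈ N u, ∑ j ∈ M u, f u i j ≤ ∑ _i ∈ N u, ∑ j ∈ M u, g u j :=
        Finset.sum_le_sum fun i hi => Finset.sum_le_sum fun j hj => hfg u hu i hi j hj
    _ = (N u).card * ∑ j ∈ M u, g u j := by rw [Finset.sum_const, nsmul_eq_mul]
    _ ≤ D * ∑ j ∈ M u, g u j := by
        gcongr
        · exact Finset.sum_nonneg (hg u hu)
        · exact hN u hu

theorem stmt_8 {d nu : ℕ} {I : Type*}
    (eU : Fin nu → EuclideanSpace ℝ (Fin d)) (eI : I → EuclideanSpace ℝ (Fin d))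
    (hU : ∀ u, ‖eU u‖ = 1) (hI : ∀ i, ‖eI i‖ = 1)
    (N Nneg : Fin nu → Finset I) (K : ℕ) (hK : ∀ u, (Nneg u).card = K)
    (dmax : ℕ) (hdeg : ∀ u, (N u).card ≤ dmax) :
    ∑ u, ∑ i ∈ N u, ∑ j ∈ Nneg u,
        Real.log (Real.exp ⟪eU u, eI i⟫ + Real.exp ⟪eU u, eI j⟫)
      ≤ ((dmax : ℝ) / 2) * Real.log (2 * Real.exp 1 ^ 2 / (Real.exp 1 ^ 2 + 1))
          * (2 * K * nu - (∑ u, ∑ j ∈ Nneg u, ‖eU u - eI j‖ ^ 2) / 2)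
        + (dmax : ℝ) * K * nu * Real.log (Real.exp 1 + 1 / Real.exp 1) := by
  set c := log (2 * exp 1 ^ 2 / (exp 1 ^ 2 + 1))
  set L := log (exp 1 + 1 / exp 1)
  have he : 1 ≤ exp 1 := one_le_exp zero_le_one
  have hc : 0 ≤ c := log_nonneg <| (one_le_div (by positivity)).2 (by nlinarith)
  have hL : 0 ≤ L := log_nonneg (le_add_of_le_of_nonneg he (by positivity))
  have hinner : ∀ u j, ⟪eU u, eI j⟫ + 1 = 2 - ‖eU u - eI j‖ ^ 2 / 2 := fun u j => by
    rw [norm_sub_sq_real, hU, hI]; ring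
  calc _ ≤ (dmax : ℝ) * ∑ u, ∑ j ∈ Nneg u, (1 / 2 * c * (2 - ‖eU u - eI j‖ ^ 2 / 2) + L) := by
        refine sum_sum_sum_le_mul_sum _ _ _ _ _ _ (fun u _ => hdeg u) (fun u _ j _ => ?_)
          fun u _ i _ j _ => ?_
        · have := (real_inner_mem_Icc_of_norm_eq_one (hU u) (hI j)).1
          rw [← hinner]
          exact add_nonneg (mul_nonneg (mul_nonneg (by norm_num) hc) (by linarith)) hL
        · rw [← hinner]
          exact log_exp_add_exp_le (real_inner_mem_Icc_of_norm_eq_one (hU u) (hI i)).2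
            (real_inner_mem_Icc_of_norm_eq_one (hU u) (hI j))
    _ = _ := by
        simp only [Finset.sum_add_distrib, ← Finset.mul_sum, Finset.sum_sub_distrib,
          ← Finset.sum_div, Finset.sum_const, hK, Finset.card_univ, Fintype.card_fin,
          nsmul_eq_mul]
        ring
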